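/- Let X be a complex Banach space, let G be a compact topological group acting separately continuously on X by continuous linear operators via a homomorphism ρ, and let K ⊆ X be a G-invariant set. Suppose z ∈ X \ K and Q is a continuous polynomial on X such that sup_{w∈K}|Q(w)| < |Q(z)|, |Q(z)| > 1, and for some η ∈ (0,1) the set of arguments { Arg(Q(ρ(γ)z)) : γ ∈ G, |Q(ρ(γ)z)| ≥ η } is finite. Then there exists a G-invariant continuous polynomial P on X that separates z from K, i.e. sup_{w∈K}|P(w)| < |P(z)|. Furthermore, if Q is homogeneous, then P can be chosen to be homogeneous. -/

import Mathlib

/-!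
Average the power `Q ^ n` over `G` against a right-invariant Haar probability measure:
`P x = ∫ Q (ρ g x) ^ n dg`. Averaging maps (homogeneous) continuous polynomials to `G`-invariant
ones of the same kind, the averaged multilinear maps staying bounded by the Banach–Steinhaus
bound on `ρ`, and `‖P w‖ ≤ c ^ n` on `K` because `K` is `G`-invariant. At `z`, pick
`max c η < t < ‖Q z‖` and let `U` be the open set where `‖Q (ρ g z)‖ > t`. Recurrence of the
rotation `(e^{iθ})_θ` on a finite-dimensional torus gives arbitrarily large `n` with
`cos (n θ) ≥ 1/2` for the finitely many arguments `θ`. Then `Re (Q (ρ g z) ^ n)` is at least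
`t ^ n / 2` on `U`, nonnegative where `‖Q (ρ g z)‖ ≥ η`, and at least `-η ^ n` elsewhere, so
`Re P z ≥ μ(U) t ^ n / 2 - η ^ n`, which beats `c ^ n` for large `n`.
-/

/-- A continuous polynomial on a normed space `X` over `𝕜`: a function of the form
`P x = a₀ + ∑_{k=1}^{N} A_k (x, …, x)` where each `A_k` is a continuous `k`-linear map. -/
def IsContinuousPolynomial (𝕜 : Type*) [NontriviallyNormedField 𝕜] {X : Type*}
    [NormedAddCommGroup X] [NormedSpace 𝕜 X] (P : X → 𝕜) : Prop :=
  ∃ (N : ℕ) (a₀ : 𝕜)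
    (A : (k : Fin N) → ContinuousMultilinearMap 𝕜 (fun _ : Fin (k.1 + 1) => X) 𝕜),
    ∀ x, P x = a₀ + ∑ k, A k (fun _ => x)

/-- An `m`-homogeneous continuous polynomial: `P x = A (x, …, x)` for a single continuous
`m`-linear map `A`. -/
def IsHomogeneousPolynomial (𝕜 : Type*) [NontriviallyNormedField 𝕜] {X : Type*}
    [NormedAddCommGroup X] [NormedSpace 𝕜 X] (m : ℕ) (P : X → 𝕜) : Prop :=
  ∃ A : ContinuousMultilinearMap 𝕜 (fun _ : Fin m => X) 𝕜, ∀ x, P x = A (fun _ => x)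

open MeasureTheory Filter Topology

section Polynomial

variable {𝕜 : Type*} [NontriviallyNormedField 𝕜] {X : Type*} [NormedAddCommGroup X]
  [NormedSpace 𝕜 X]

namespace IsHomogeneousPolynomial

theorem continuous {m : ℕ} {P : X → 𝕜} (hP : IsHomogeneousPolynomial 𝕜 m P) : Continuous P := by
  obtain ⟨A, hA⟩ := hP
  rw [funext hA]
  fun_prop

theorem const (a : 𝕜) : IsHomogeneousPolynomial 𝕜 0 (fun _ : X => a) :=
  ⟨ContinuousMultilinearMap.constOfIsEmpty 𝕜 _ a, fun _ => rfl⟩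

theorem sum {ι : Type*} (s : Finset ι) {m : ℕ} {F : ι → X → 𝕜}
    (hF : ∀ i ∈ s, IsHomogeneousPolynomial 𝕜 m (F i)) :
    IsHomogeneousPolynomial 𝕜 m (∑ i ∈ s, F i) := by
  choose A hA using hF
  refine ⟨∑ i ∈ s.attach, A i i.2, fun x => ?_⟩
  rw [Finset.sum_apply, sum_apply, ← Finset.sum_attach]
  exact Finset.sum_congr rfl fun i _ => hA i i.2 x

theorem mul {m l : ℕ} {P Q : X → 𝕜} (hP : IsHomogeneousPolynomial 𝕜 m P)
    (hQ : IsHomogeneousPolynomial 𝕜 l Q) : IsHomogeneousPolynomial 𝕜 (m + l) (P * Q) := by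
  obtain ⟨A, hA⟩ := hP
  obtain ⟨B, hB⟩ := hQ
  exact ⟨((A.smulRight B).uncurrySum).domDomCongr finSumFinEquiv, fun x => by
    rw [Pi.mul_apply, hA, hB]; rfl⟩

theorem pow {m : ℕ} {P : X → 𝕜} (hP : IsHomogeneousPolynomial 𝕜 m P) (n : ℕ) :
    IsHomogeneousPolynomial 𝕜 (m * n) (P ^ n) := by
  induction n with
  | zero => rw [mul_zero, pow_zero]; exact const 1
  | succ n ih => simpa [pow_succ, mul_add] using ih.mul hP

end IsHomogeneousPolynomial

theorem isContinuousPolynomial_iff_exists_sum_homogeneous {P : X → 𝕜} :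
    IsContinuousPolynomial 𝕜 P ↔ ∃ (ι : Type) (_ : Fintype ι) (d : ι → ℕ) (F : ι → X → 𝕜),
      (∀ i, IsHomogeneousPolynomial 𝕜 (d i) (F i)) ∧ P = ∑ i, F i := by
  classical
  constructor
  · rintro ⟨N, a₀, A, hA⟩
    refine ⟨Option (Fin N), inferInstance, fun o => o.elim 0 (·.1 + 1),
      fun o => o.elim (fun _ => a₀) (fun k x => A k fun _ => x), ?_, ?_⟩
    · rintro (_ | k)
      · exact .const a₀
      · exact ⟨A k, fun _ => rfl⟩
    · ext x
      simp [hA, Fintype.sum_option]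
  · rintro ⟨ι, _, d, F, hF, rfl⟩
    have hdeg : ∀ k, IsHomogeneousPolynomial 𝕜 k (∑ i with d i = k, F i) := fun k =>
      .sum _ fun i hi => (Finset.mem_filter.1 hi).2 ▸ hF i
    choose A hA using hdeg
    refine ⟨Finset.univ.sup d, A 0 0, fun k => A (k + 1), fun x => ?_⟩
    have hA₀ : A 0 0 = A 0 fun _ => x := congr_arg (A 0) (Subsingleton.elim _ _)
    have hdeg_lt : ∀ i, d i ∈ Finset.range (Finset.univ.sup d + 1) := fun i =>
      Finset.mem_range.2 (Nat.lt_succ_of_le (Finset.le_sup (Finset.mem_univ i)))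
    rw [hA₀, Fin.sum_univ_eq_sum_range (fun k => A (k + 1) fun _ => x), add_comm,
      ← Finset.sum_range_succ' (fun k => A k fun _ => x), Finset.sum_apply,
      ← Finset.sum_fiberwise_of_maps_to (fun i _ => hdeg_lt i)]
    simp only [← hA, Finset.sum_apply]

namespace IsContinuousPolynomial

theorem continuous {P : X → 𝕜} (hP : IsContinuousPolynomial 𝕜 P) : Continuous P := by
  obtain ⟨ι, _, d, F, hF, rfl⟩ := isContinuousPolynomial_iff_exists_sum_homogeneous.1 hP
  rw [Finset.sum_fn]
  exact continuous_finsetSum _ fun i _ => (hF i).continuous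

theorem one : IsContinuousPolynomial 𝕜 (1 : X → 𝕜) :=
  ⟨0, 1, finZeroElim, fun _ => by simp⟩

theorem mul {P Q : X → 𝕜} (hP : IsContinuousPolynomial 𝕜 P) (hQ : IsContinuousPolynomial 𝕜 Q) :
    IsContinuousPolynomial 𝕜 (P * Q) := by
  obtain ⟨ι, _, d, F, hF, rfl⟩ := isContinuousPolynomial_iff_exists_sum_homogeneous.1 hP
  obtain ⟨κ, _, e, G, hG, rfl⟩ := isContinuousPolynomial_iff_exists_sum_homogeneous.1 hQ
  refine isContinuousPolynomial_iff_exists_sum_homogeneous.2 ⟨ι × κ, inferInstance,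
    fun p => d p.1 + e p.2, fun p => F p.1 * G p.2, fun p => (hF p.1).mul (hG p.2), ?_⟩
  rw [Finset.sum_mul_sum, Fintype.sum_prod_type]

theorem pow {P : X → 𝕜} (hP : IsContinuousPolynomial 𝕜 P) (n : ℕ) :
    IsContinuousPolynomial 𝕜 (P ^ n) := by
  induction n with
  | zero => exact pow_zero P ▸ one
  | succ n ih => exact pow_succ P n ▸ ih.mul hP

end IsContinuousPolynomial

end Polynomial

section OrbitAverage

namespace ContinuousMultilinearMap

variable {𝕜 : Type*} [RCLike 𝕜] {G : Type*} [MeasurableSpace G] [TopologicalSpace G]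
  [OpensMeasurableSpace G] {μ : Measure G} [IsFiniteMeasure μ] {ι : Type*} [Fintype ι]
  {E : ι → Type*} [∀ i, NormedAddCommGroup (E i)] [∀ i, NormedSpace 𝕜 (E i)]
  {B : G → ContinuousMultilinearMap 𝕜 E 𝕜} {C : ℝ}

theorem integrable_apply (hB : ∀ v, Continuous fun g => B g v) (hC : ∀ g, ‖B g‖ ≤ C)
    (v : ∀ i, E i) : Integrable (fun g => B g v) μ :=
  .of_bound (hB v).aestronglyMeasurable (C * ∏ i, ‖v i‖)
    (ae_of_all _ fun g => (B g).le_of_opNorm_le (hC g) v)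

theorem exists_apply_eq_integral (hB : ∀ v, Continuous fun g => B g v) (hC : ∀ g, ‖B g‖ ≤ C) :
    ∃ A : ContinuousMultilinearMap 𝕜 E 𝕜, ∀ v, A v = ∫ g, B g v ∂μ := by
  let A : MultilinearMap 𝕜 E 𝕜 :=
    { toFun := fun v => ∫ g, B g v ∂μ
      map_update_add' := fun v i a b => by
        simp only [map_update_add]
        exact integral_add (integrable_apply hB hC _) (integrable_apply hB hC _)
      map_update_smul' := fun v i c a => by
        simp only [map_update_smul]
        exact integral_smul c _ }
  refine ⟨A.mkContinuous (μ.real Set.univ * C) fun v => ?_, fun v => rfl⟩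
  calc ‖∫ g, B g v ∂μ‖ ≤ (C * ∏ i, ‖v i‖) * μ.real Set.univ :=
        norm_integral_le_of_norm_le_const (ae_of_all _ fun g => (B g).le_of_opNorm_le (hC g) v)
    _ = μ.real Set.univ * C * ∏ i, ‖v i‖ := by ring

end ContinuousMultilinearMap

variable {𝕜 : Type*} [RCLike 𝕜] {X : Type*} [NormedAddCommGroup X] [NormedSpace 𝕜 X]
  {G : Type*} [Group G]

noncomputable def orbitAverage [MeasurableSpace G] (μ : Measure G) (ρ : G →* (X ≃L[𝕜] X))
    (F : X → 𝕜) (x : X) : 𝕜 :=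
  ∫ g, F (ρ g x) ∂μ

theorem orbitAverage_apply_map [MeasurableSpace G] [MeasurableMul G] {μ : Measure G}
    [μ.IsMulRightInvariant] (ρ : G →* (X ≃L[𝕜] X)) (F : X → 𝕜) (g : G) (x : X) :
    orbitAverage μ ρ F (ρ g x) = orbitAverage μ ρ F x := by
  rw [orbitAverage, orbitAverage, ← integral_mul_right_eq_self (fun h => F (ρ h x)) g]
  simp only [map_mul]
  rfl

theorem norm_orbitAverage_le [MeasurableSpace G] {μ : Measure G} [IsProbabilityMeasure μ]
    (ρ : G →* (X ≃L[𝕜] X)) {F : X → 𝕜} {x : X} {c : ℝ} (hc : ∀ g, ‖F (ρ g x)‖ ≤ c) :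
    ‖orbitAverage μ ρ F x‖ ≤ c := by
  simpa [orbitAverage] using norm_integral_le_of_norm_le_const (μ := μ) (ae_of_all μ hc)

variable [TopologicalSpace G] {ρ : G →* (X ≃L[𝕜] X)} {M : ℝ}

namespace IsHomogeneousPolynomial

variable {m : ℕ} {F : X → 𝕜}

theorem exists_orbit_multilinear (hρ : ∀ x, Continuous fun g => ρ g x)
    (hM : ∀ g, ‖(ρ g : X →L[𝕜] X)‖ ≤ M) (hF : IsHomogeneousPolynomial 𝕜 m F) :
    ∃ (B : G → ContinuousMultilinearMap 𝕜 (fun _ : Fin m => X) 𝕜) (C : ℝ),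
      (∀ v, Continuous fun g => B g v) ∧ (∀ g, ‖B g‖ ≤ C) ∧ ∀ g x, F (ρ g x) = B g fun _ => x := by
  obtain ⟨A, hA⟩ := hF
  refine ⟨fun g => A.compContinuousLinearMap fun _ => (ρ g : X →L[𝕜] X), ‖A‖ * M ^ m,
    fun v => ?_, fun g => ?_, fun g x => hA _⟩
  · simp only [ContinuousMultilinearMap.compContinuousLinearMap_apply,
      ContinuousLinearEquiv.coe_coe]
    exact A.cont.comp (continuous_pi fun i => hρ (v i))
  · calc _ ≤ ‖A‖ * ∏ _ : Fin m, ‖(ρ g : X →L[𝕜] X)‖ := A.norm_compContinuousLinearMap_le _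
      _ ≤ ‖A‖ * M ^ m := by
        rw [Finset.prod_const, Finset.card_univ, Fintype.card_fin]
        gcongr
        exact hM g

variable [MeasurableSpace G] [OpensMeasurableSpace G] {μ : Measure G} [IsFiniteMeasure μ]

theorem integrable_orbit (hρ : ∀ x, Continuous fun g => ρ g x)
    (hM : ∀ g, ‖(ρ g : X →L[𝕜] X)‖ ≤ M) (hF : IsHomogeneousPolynomial 𝕜 m F) (x : X) :
    Integrable (fun g => F (ρ g x)) μ := by
  obtain ⟨B, C, hB, hC, hFB⟩ := hF.exists_orbit_multilinear hρ hM
  simpa only [hFB] using ContinuousMultilinearMap.integrable_apply hB hC fun _ => x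

theorem orbitAverage (hρ : ∀ x, Continuous fun g => ρ g x)
    (hM : ∀ g, ‖(ρ g : X →L[𝕜] X)‖ ≤ M) (hF : IsHomogeneousPolynomial 𝕜 m F) :
    IsHomogeneousPolynomial 𝕜 m (orbitAverage μ ρ F) := by
  obtain ⟨B, C, hB, hC, hFB⟩ := hF.exists_orbit_multilinear hρ hM
  obtain ⟨A, hA⟩ := ContinuousMultilinearMap.exists_apply_eq_integral (μ := μ) hB hC
  exact ⟨A, fun x => by simp only [_root_.orbitAverage, hFB, hA]⟩

end IsHomogeneousPolynomial

theorem IsContinuousPolynomial.orbitAverage [MeasurableSpace G] [OpensMeasurableSpace G]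
    {μ : Measure G} [IsFiniteMeasure μ] (hρ : ∀ x, Continuous fun g => ρ g x)
    (hM : ∀ g, ‖(ρ g : X →L[𝕜] X)‖ ≤ M) {P : X → 𝕜} (hP : IsContinuousPolynomial 𝕜 P) :
    IsContinuousPolynomial 𝕜 (orbitAverage μ ρ P) := by
  obtain ⟨ι, _, d, F, hF, rfl⟩ := isContinuousPolynomial_iff_exists_sum_homogeneous.1 hP
  refine isContinuousPolynomial_iff_exists_sum_homogeneous.2 ⟨ι, inferInstance, d,
    fun i => _root_.orbitAverage μ ρ (F i), fun i => (hF i).orbitAverage hρ hM, ?_⟩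
  ext x
  simp only [_root_.orbitAverage, Finset.sum_apply]
  exact integral_finsetSum _ fun i _ => (hF i).integrable_orbit hρ hM x

end OrbitAverage

theorem frequently_pow_mem_nhds_one {H : Type*} [Group H] [TopologicalSpace H]
    [IsTopologicalGroup H] [CompactSpace H] [FirstCountableTopology H] (h : H) {V : Set H}
    (hV : V ∈ 𝓝 (1 : H)) : ∃ᶠ n in atTop, h ^ n ∈ V := by
  obtain ⟨a, -, φ, hφ, hlim⟩ :=
    isCompact_univ.tendsto_subseq (x := fun n => h ^ n) fun _ => Set.mem_univ _
  refine frequently_atTop.2 fun B => ?_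
  have hgap : Tendsto (fun k => h ^ φ (k + (B + 1)) * (h ^ φ k)⁻¹) atTop (𝓝 1) := by
    simpa using (hlim.comp (tendsto_add_atTop_nat (B + 1))).mul hlim.inv
  obtain ⟨k, hk⟩ := (hgap.eventually_mem hV).exists
  have hle : B + 1 + φ k ≤ φ (k + (B + 1)) := by
    simpa [add_comm] using hφ.add_le_nat (B + 1) k
  exact ⟨φ (k + (B + 1)) - φ k, by omega, by rwa [pow_sub h (by omega)]⟩

theorem frequently_forall_half_le_cos_nat_mul {s : Set ℝ} (hs : s.Finite) :
    ∃ᶠ n : ℕ in atTop, ∀ θ ∈ s, 1 / 2 ≤ Real.cos (n * θ) := by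
  have : Finite s := hs
  have hV : {u : s → Circle | ∀ θ, 1 / 2 < (u θ : ℂ).re} ∈ 𝓝 1 :=
    eventually_all.2 fun θ => ContinuousAt.eventually_lt continuousAt_const
      (Complex.continuous_re.comp (continuous_subtype_val.comp (continuous_apply θ))).continuousAt
      (by norm_num)
  refine (frequently_pow_mem_nhds_one (fun θ : s => Circle.exp θ) hV).mono
    fun n hn θ hθ => ?_
  have := hn ⟨θ, hθ⟩
  rw [Pi.pow_apply, ← Circle.exp_nsmul, Circle.coe_exp, nsmul_eq_mul] at this
  exact_mod_cast (Complex.exp_ofReal_mul_I_re _ ▸ this).le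

namespace Complex

theorem re_pow_eq_norm_pow_mul_cos (w : ℂ) (n : ℕ) :
    (w ^ n).re = ‖w‖ ^ n * Real.cos (n * arg w) := by
  conv_lhs => rw [← norm_mul_exp_arg_mul_I w]
  rw [mul_pow, ← exp_nat_mul, ← ofReal_pow,
    show (n : ℂ) * (arg w * I) = ((n * arg w : ℝ) : ℂ) * I by push_cast; ring,
    re_ofReal_mul, exp_ofReal_mul_I_re]

theorem norm_pow_div_two_le_re_pow {w : ℂ} {n : ℕ} (h : 1 / 2 ≤ Real.cos (n * arg w)) :
    ‖w‖ ^ n / 2 ≤ (w ^ n).re := by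
  rw [re_pow_eq_norm_pow_mul_cos]
  nlinarith [pow_nonneg (norm_nonneg w) n]

theorem indicator_sub_pow_le_re_pow {w : ℂ} {n : ℕ} {t η : ℝ} (hη : 0 < η) (hηt : η < t)
    (hcos : η ≤ ‖w‖ → 1 / 2 ≤ Real.cos (n * arg w)) :
    {w : ℂ | t < ‖w‖}.indicator (fun _ => t ^ n / 2) w - η ^ n ≤ (w ^ n).re := by
  rcases lt_or_ge ‖w‖ η with hlt | hge
  · have hw : w ∉ {w : ℂ | t < ‖w‖} := fun (h : t < ‖w‖) => by linarith
    rw [Set.indicator_of_notMem hw, zero_sub]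
    calc -η ^ n ≤ -‖w ^ n‖ := by
          rw [norm_pow]; exact neg_le_neg (pow_le_pow_left₀ (norm_nonneg _) hlt.le n)
      _ ≤ (w ^ n).re := neg_le_of_abs_le (abs_re_le_norm _)
  · have hind : {w : ℂ | t < ‖w‖}.indicator (fun _ => t ^ n / 2) w ≤ ‖w‖ ^ n / 2 := by
      by_cases hw : t < ‖w‖
      · rw [Set.indicator_of_mem (show w ∈ {w : ℂ | t < ‖w‖} from hw)]
        gcongr
        exact (hη.trans hηt).le
      · rw [Set.indicator_of_notMem (show w ∉ {w : ℂ | t < ‖w‖} from hw)]; positivity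
    linarith [norm_pow_div_two_le_re_pow (hcos hge), pow_pos hη n]

end Complex

theorem eventually_pow_add_pow_lt_mul_pow {a b t d : ℝ} (ha : 0 ≤ a) (hb : 0 ≤ b) (hat : a < t)
    (hbt : b < t) (hd : 0 < d) : ∀ᶠ n : ℕ in atTop, a ^ n + b ^ n < d * t ^ n := by
  have ht : 0 < t := ha.trans_lt hat
  have hlim : Tendsto (fun n : ℕ => (a / t) ^ n + (b / t) ^ n) atTop (𝓝 0) := by
    simpa using (tendsto_pow_atTop_nhds_zero_of_lt_one (div_nonneg ha ht.le)
      ((div_lt_one ht).2 hat)).add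
      (tendsto_pow_atTop_nhds_zero_of_lt_one (div_nonneg hb ht.le) ((div_lt_one ht).2 hbt))
  filter_upwards [hlim.eventually_lt_const hd] with n hn
  rwa [div_pow, div_pow, ← add_div, div_lt_iff₀ (pow_pos ht n)] at hn

theorem exists_pow_lt_norm_integral_pow {G : Type*} [TopologicalSpace G] [CompactSpace G]
    [MeasurableSpace G] [OpensMeasurableSpace G] (μ : Measure G) [IsProbabilityMeasure μ]
    [μ.IsOpenPosMeasure] {f : G → ℂ} (hf : Continuous f) {c η : ℝ} (hc : 0 ≤ c) (hη : 0 < η)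
    {g₀ : G} (hcg₀ : c < ‖f g₀‖) (hηg₀ : η < ‖f g₀‖)
    (hfin : {θ : ℝ | ∃ g, η ≤ ‖f g‖ ∧ θ = Complex.arg (f g)}.Finite) :
    ∃ n : ℕ, c ^ n < ‖∫ g, f g ^ n ∂μ‖ := by
  obtain ⟨t, hct, htg₀⟩ := exists_between (max_lt hcg₀ hηg₀)
  obtain ⟨hc_lt, hη_lt⟩ := max_lt_iff.1 hct
  set U := f ⁻¹' {w : ℂ | t < ‖w‖}
  have hU : IsOpen U := isOpen_lt continuous_const hf.norm
  have hμU : 0 < μ.real U :=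
    ENNReal.toReal_pos (hU.measure_pos μ ⟨g₀, htg₀⟩).ne' (measure_ne_top μ U)
  obtain ⟨n, hcos, hn⟩ := ((frequently_forall_half_le_cos_nat_mul hfin).and_eventually
    (eventually_pow_add_pow_lt_mul_pow hc hη.le hc_lt hη_lt (half_pos hμU))).exists
  have hint : Integrable (fun g => f g ^ n) μ :=
    (hf.pow n).integrable_of_hasCompactSupport (.of_compactSpace _)
  have hind : Integrable (U.indicator fun _ => t ^ n / 2) μ :=
    (integrable_const _).indicator hU.measurableSet
  refine ⟨n, ?_⟩
  calc c ^ n < μ.real U * (t ^ n / 2) - η ^ n := by linarith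
    _ = ∫ g, (U.indicator (fun _ => t ^ n / 2) g - η ^ n) ∂μ := by
        rw [integral_sub hind (integrable_const _), integral_indicator_const _ hU.measurableSet,
          integral_const, probReal_univ, one_smul, smul_eq_mul]
    _ ≤ ∫ g, (f g ^ n).re ∂μ :=
        integral_mono (hind.sub (integrable_const _)) hint.re fun g =>
          Complex.indicator_sub_pow_le_re_pow hη hη_lt fun hg => hcos _ ⟨g, hg, rfl⟩
    _ = (∫ g, f g ^ n ∂μ).re := integral_re hint
    _ ≤ ‖∫ g, f g ^ n ∂μ‖ := Complex.re_le_norm _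

theorem exists_forall_norm_le_of_continuous_apply {𝕜 : Type*} [NontriviallyNormedField 𝕜]
    {G E F : Type*} [TopologicalSpace G] [CompactSpace G] [NormedAddCommGroup E]
    [NormedSpace 𝕜 E] [CompleteSpace E] [NormedAddCommGroup F] [NormedSpace 𝕜 F]
    {L : G → E →L[𝕜] F} (hL : ∀ x, Continuous fun g => L g x) : ∃ M, ∀ g, ‖L g‖ ≤ M :=
  banach_steinhaus fun x => (isCompact_univ.exists_bound_of_continuousOn (hL x).continuousOn).imp
    fun _ hC g => hC g (Set.mem_univ g)

theorem statement4_general {X : Type*} [NormedAddCommGroup X] [NormedSpace ℂ X] [CompleteSpace X]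
    {G : Type*} [Group G] [TopologicalSpace G] [IsTopologicalGroup G] [CompactSpace G]
    (ρ : G →* (X ≃L[ℂ] X)) (hρ : ∀ x : X, Continuous fun g : G => (ρ g) x)
    (K : Set X) (hK : ∀ (g : G), ∀ x ∈ K, (ρ g) x ∈ K)
    (z : X)
    (Q : X → ℂ) (hQ : IsContinuousPolynomial ℂ Q)
    (hsep : ∃ c, c < ‖Q z‖ ∧ ∀ w ∈ K, ‖Q w‖ ≤ c)
    (hQz : 1 < ‖Q z‖)
    (η : ℝ) (hη₀ : 0 < η) (hη₁ : η < 1)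
    (hfin : {θ : ℝ | ∃ γ : G, η ≤ ‖Q ((ρ γ) z)‖ ∧ θ = Complex.arg (Q ((ρ γ) z))}.Finite) :
    (∃ P : X → ℂ, IsContinuousPolynomial ℂ P ∧
      (∀ (g : G) (x : X), P ((ρ g) x) = P x) ∧
      ∃ c, c < ‖P z‖ ∧ ∀ w ∈ K, ‖P w‖ ≤ c) ∧
    ∀ m : ℕ, IsHomogeneousPolynomial ℂ m Q →
      ∃ (m' : ℕ) (P : X → ℂ), IsHomogeneousPolynomial ℂ m' P ∧
        (∀ (g : G) (x : X), P ((ρ g) x) = P x) ∧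
        ∃ c, c < ‖P z‖ ∧ ∀ w ∈ K, ‖P w‖ ≤ c := by
  obtain ⟨c, hcz, hcK⟩ := hsep
  borelize G
  let μ : Measure G := (Measure.haarMeasure ⊤).inv
  have : IsProbabilityMeasure μ := ⟨by
    rw [Measure.inv_apply, Set.inv_univ, ← TopologicalSpace.PositiveCompacts.coe_top,
      Measure.haarMeasure_self]⟩
  obtain ⟨M, hM⟩ := exists_forall_norm_le_of_continuous_apply
    (L := fun g => (ρ g : X →L[ℂ] X)) hρ
  have hz : Q (ρ 1 z) = Q z := by rw [map_one]; rfl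
  obtain ⟨n, hn⟩ := exists_pow_lt_norm_integral_pow μ (f := fun g => Q (ρ g z))
    (hQ.continuous.comp (hρ z)) (le_max_right c 0) hη₀ (g₀ := 1)
    (by rw [hz]; exact max_lt hcz (one_pos.trans hQz)) (by rw [hz]; exact hη₁.trans hQz) hfin
  let P := orbitAverage μ ρ (Q ^ n)
  have hPinv : ∀ g x, P (ρ g x) = P x := orbitAverage_apply_map ρ _
  have hPsep : ∃ c, c < ‖P z‖ ∧ ∀ w ∈ K, ‖P w‖ ≤ c :=
    ⟨max c 0 ^ n, hn, fun w hw => norm_orbitAverage_le ρ fun g => by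
      rw [Pi.pow_apply, norm_pow]
      exact pow_le_pow_left₀ (norm_nonneg _) ((hcK _ (hK g w hw)).trans (le_max_left c 0)) n⟩
  exact ⟨⟨P, (hQ.pow n).orbitAverage hρ hM, hPinv, hPsep⟩,
    fun m hm => ⟨m * n, P, (hm.pow n).orbitAverage hρ hM, hPinv, hPsep⟩⟩

/-- Complex separation theorem: if `X` is a complex Banach space, `G` a
compact group acting separately continuously by invertible continuous linear operators,
`K` a `G`-invariant set, and `Q` a continuous polynomial separating `z ∉ K` from `K` with
`|Q(z)| > 1` and such that for some `η ∈ (0,1)` the set of arguments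
`{Arg Q(ρ(γ)z) : γ ∈ G, |Q(ρ(γ)z)| ≥ η}` is finite, then there is a `G`-invariant continuous
polynomial `P` separating `z` from `K`; if `Q` is homogeneous, `P` can be chosen homogeneous. -/
theorem statement4 {X : Type*} [NormedAddCommGroup X] [NormedSpace ℂ X] [CompleteSpace X]
    {G : Type*} [Group G] [TopologicalSpace G] [IsTopologicalGroup G] [CompactSpace G]
    (ρ : G →* (X ≃L[ℂ] X)) (hρ : ∀ x : X, Continuous fun g : G => (ρ g) x)
    (K : Set X) (hK : ∀ (g : G), ∀ x ∈ K, (ρ g) x ∈ K)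
    (z : X) (hz : z ∉ K)
    (Q : X → ℂ) (hQ : IsContinuousPolynomial ℂ Q)
    (hsep : ∃ c, c < ‖Q z‖ ∧ ∀ w ∈ K, ‖Q w‖ ≤ c)
    (hQz : 1 < ‖Q z‖)
    (η : ℝ) (hη₀ : 0 < η) (hη₁ : η < 1)
    (hfin : {θ : ℝ | ∃ γ : G, η ≤ ‖Q ((ρ γ) z)‖ ∧ θ = Complex.arg (Q ((ρ γ) z))}.Finite) :
    (∃ P : X → ℂ, IsContinuousPolynomial ℂ P ∧
      (∀ (g : G) (x : X), P ((ρ g) x) = P x) ∧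
      ∃ c, c < ‖P z‖ ∧ ∀ w ∈ K, ‖P w‖ ≤ c) ∧
    ∀ m : ℕ, IsHomogeneousPolynomial ℂ m Q →
      ∃ (m' : ℕ) (P : X → ℂ), IsHomogeneousPolynomial ℂ m' P ∧
        (∀ (g : G) (x : X), P ((ρ g) x) = P x) ∧
        ∃ c, c < ‖P z‖ ∧ ∀ w ∈ K, ‖P w‖ ≤ c :=
  statement4_general ρ hρ K hK z Q hQ hsep hQz η hη₀ hη₁ hfin
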